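/- The B-term B² = B ∘ B does not have the ρ-property: the sequence of canonical list representations L_i of (B²)ₗ^i (under the application operation ⊛ on decreasing lists with L₁ = [0,0]) has unbounded length; specifically L_{m(m+1)/2} has length 2m for every m ≥ 1, hence L_i = L_j implies i = j restricted to these indices, so the sequence (L_i) is not eventually periodic. -/

import Mathlib

/-- One application of the swap rewriting rule on degree lists:
[..., n, m, ...] → [..., m+1, n, ...] when n < m. -/
inductive SwapStep : List ℕ → List ℕ → Prop
  | swap (l₁ l₂ : List ℕ) {n m : ℕ} (h : n < m) :
      SwapStep (l₁ ++ n :: m :: l₂) (l₁ ++ (m + 1) :: n :: l₂)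

/-- Remove trailing zeros from a list. -/
def stripZeros (L : List ℕ) : List ℕ := (L.reverse.dropWhile (· == 0)).reverse

/-- `Apply L₁ L₂ L` holds when `L` is the canonical (weakly decreasing) list
representing the application of the B-term represented by `L₁` to that
represented by `L₂`:  append `L₁` with each element of `L₂` raised by one,
normalize with the swap rule until weakly decreasing, strip trailing zeros,
and decrement each element. -/

def Apply (L₁ L₂ L : List ℕ) : Prop :=
  ∃ M : List ℕ,
    Relation.ReflTransGen SwapStep (L₁ ++ L₂.map (· + 1)) M ∧
    List.Chain' (· ≥ ·) M ∧
    L = (stripZeros M).map (· - 1)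


/-!
The normal form of a list under the swap rule can be computed by inserting its entries one at a
time, from the right, into a weakly decreasing list: an entry `a` moves past every larger entry
`b`, raising it to `b + 1`. Two such insertions of `n < m` commute exactly as the swap rule
`[n, m] → [m + 1, n]` prescribes, so the normal form is invariant under swap steps and `Apply` is
the graph of a function `applyNF`.

Writing `stairs k b = [b+k-1, b+k-1, …, b, b]`, one application to `[0, 0]` sends
`stairs k (2r+2) ++ stairs r 0` to `stairs (k+1) (2r) ++ stairs (r-1) 0`. Starting from the empty
list, the orbit therefore reaches `stairs m 0`, of length `2m`, after `m(m+1)/2` steps. A periodic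
orbit would have bounded lengths; concretely, period `j` from index `i` would force the lists at
the indices `T(i)` and `T(i + 2j) = T(i) + j(2i + 2j + 1)` to agree, `T` the triangular numbers.
-/

open Function

namespace B2

def swapInsert : ℕ → List ℕ → List ℕ
  | a, [] => [a]
  | a, b :: t => if b ≤ a then a :: b :: t else (b + 1) :: swapInsert a t

def swapNormalize (L : List ℕ) : List ℕ := L.foldr swapInsert []

def applyNF (L₁ L₂ : List ℕ) : List ℕ :=
  (stripZeros (swapNormalize (L₁ ++ L₂.map (· + 1)))).map (· - 1)

lemma swapInsert_cons_of_le {a b : ℕ} {t : List ℕ} (h : b ≤ a) :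
    swapInsert a (b :: t) = a :: b :: t := by
  simp [swapInsert, h]

lemma swapInsert_cons_of_lt {a b : ℕ} {t : List ℕ} (h : a < b) :
    swapInsert a (b :: t) = (b + 1) :: swapInsert a t := by
  simp [swapInsert, Nat.not_le.mpr h]

lemma swapInsert_swapInsert_of_lt {n m : ℕ} (h : n < m) (K : List ℕ) :
    swapInsert n (swapInsert m K) = swapInsert (m + 1) (swapInsert n K) := by
  induction K with
  | nil => simp [swapInsert, Nat.not_le.mpr h, Nat.le_succ_of_le h.le]
  | cons b t ih =>
    rcases le_or_gt b n with hbn | hnb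
    · rw [swapInsert_cons_of_le (hbn.trans h.le), swapInsert_cons_of_lt h,
        swapInsert_cons_of_le hbn, swapInsert_cons_of_le (by omega)]
    rcases le_or_gt b m with hbm | hmb
    · rw [swapInsert_cons_of_le hbm, swapInsert_cons_of_lt h, swapInsert_cons_of_lt hnb,
        swapInsert_cons_of_le (by omega)]
    · rw [swapInsert_cons_of_lt hmb, swapInsert_cons_of_lt (by omega),
        swapInsert_cons_of_lt hnb, swapInsert_cons_of_lt (by omega), ih]

lemma swapNormalize_append (A B : List ℕ) :
    swapNormalize (A ++ B) = A.foldr swapInsert (swapNormalize B) :=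
  List.foldr_append

lemma swapNormalize_eq_of_swapStep {L L' : List ℕ} (h : SwapStep L L') :
    swapNormalize L = swapNormalize L' := by
  obtain ⟨l₁, l₂, h⟩ := h
  rw [swapNormalize_append, swapNormalize_append]
  exact congrArg (l₁.foldr swapInsert) (swapInsert_swapInsert_of_lt h _)

lemma swapNormalize_eq_of_reflTransGen {L M : List ℕ}
    (h : Relation.ReflTransGen SwapStep L M) : swapNormalize L = swapNormalize M := by
  induction h with
  | refl => rfl
  | tail _ hstep ih => rw [ih, swapNormalize_eq_of_swapStep hstep]

lemma foldr_swapInsert_of_pairwise :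
    ∀ {A B : List ℕ}, (A ++ B).Pairwise (· ≥ ·) → A.foldr swapInsert B = A ++ B
  | [], _, _ => rfl
  | a :: A, B, h => by
    rw [List.cons_append, List.pairwise_cons] at h
    rw [List.foldr_cons, foldr_swapInsert_of_pairwise h.2, List.cons_append]
    cases hAB : A ++ B with
    | nil => rfl
    | cons b t => exact swapInsert_cons_of_le (h.1 b (by simp [hAB]))

lemma swapNormalize_of_pairwise {M : List ℕ} (h : M.Pairwise (· ≥ ·)) :
    swapNormalize M = M := by
  have := foldr_swapInsert_of_pairwise (A := M) (B := []) (by rwa [List.append_nil])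
  rwa [List.append_nil] at this

lemma Apply.eq_applyNF {L₁ L₂ L : List ℕ} (h : Apply L₁ L₂ L) :
    L = applyNF L₁ L₂ := by
  obtain ⟨M, hM, hsorted, rfl⟩ := h
  rw [applyNF, swapNormalize_eq_of_reflTransGen hM,
    swapNormalize_of_pairwise (List.isChain_iff_pairwise.mp hsorted)]

lemma stripZeros_append_zero (L : List ℕ) : stripZeros (L ++ [0]) = stripZeros L :=
  List.rdropWhile_concat_pos _ _ _ rfl

lemma stripZeros_of_zero_not_mem {L : List ℕ} (h : 0 ∉ L) : stripZeros L = L :=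
  List.rdropWhile_eq_self_iff.mpr fun hL hlast =>
    h (beq_iff_eq.mp hlast ▸ List.getLast_mem hL)

def stairs : ℕ → ℕ → List ℕ
  | 0, _ => []
  | k + 1, b => (b + k) :: (b + k) :: stairs k b

lemma length_stairs (k b : ℕ) : (stairs k b).length = 2 * k := by
  induction k with
  | zero => rfl
  | succ k ih => simp [stairs, ih]; omega

lemma mem_stairs {x k b : ℕ} : x ∈ stairs k b ↔ b ≤ x ∧ x < b + k := by
  induction k with
  | zero => simp [stairs]
  | succ k ih => simp [stairs, ih]; omega

lemma pairwise_stairs (k b : ℕ) : (stairs k b).Pairwise (· ≥ ·) := by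
  induction k with
  | zero => exact List.Pairwise.nil
  | succ k ih =>
    simp only [stairs, List.pairwise_cons, List.mem_cons, mem_stairs]
    exact ⟨fun y hy => by omega, fun y hy => by omega, ih⟩

lemma pairwise_stairs_append_stairs {k b l c : ℕ} (h : c + l ≤ b + 1) :
    (stairs k b ++ stairs l c).Pairwise (· ≥ ·) :=
  List.pairwise_append.mpr ⟨pairwise_stairs k b, pairwise_stairs l c,
    fun x hx y hy => by rw [mem_stairs] at hx hy; omega⟩

lemma stairs_append_stairs (k l b : ℕ) : stairs k (b + l) ++ stairs l b = stairs (k + l) b := by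
  induction k with
  | zero => simp [stairs]
  | succ k ih =>
    rw [Nat.succ_add, stairs, stairs, List.cons_append, List.cons_append, ih,
      Nat.add_right_comm b l k, Nat.add_assoc b k l]

lemma map_sub_one_stairs (k b : ℕ) : (stairs k (b + 1)).map (· - 1) = stairs k b := by
  induction k with
  | zero => rfl
  | succ k ih => simp [stairs, ih]

lemma swapInsert_cons_cons_of_lt {a b : ℕ} (h : a < b) (L : List ℕ) :
    swapInsert a (b :: b :: L) = (b + 1) :: (b + 1) :: swapInsert a L := by
  rw [swapInsert_cons_of_lt h, swapInsert_cons_of_lt h]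

lemma foldr_swapInsert_stairs (j : ℕ) :
    (stairs j 0).foldr swapInsert [1, 1] = (2 * j + 1) :: (2 * j + 1) :: stairs j 0 := by
  induction j with
  | zero => rfl
  | succ j ih =>
    have hj : swapInsert j (stairs j 0) = j :: stairs j 0 := by
      cases j with
      | zero => rfl
      | succ j => exact swapInsert_cons_of_le (by omega)
    simp only [stairs, Nat.zero_add, List.foldr_cons, ih]
    rw [swapInsert_cons_cons_of_lt (by omega), swapInsert_cons_cons_of_lt (by omega), hj,
      swapInsert_cons_of_le le_rfl, show 2 * (j + 1) + 1 = 2 * j + 1 + 1 + 1 by ring]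

lemma swapNormalize_stairs (k r : ℕ) :
    swapNormalize (stairs k (2 * r + 2) ++ stairs r 0 ++ [1, 1]) =
      stairs (k + 1) (2 * r + 1) ++ stairs r 0 := by
  have hsplit : (2 * r + 1) :: (2 * r + 1) :: stairs r 0 = stairs 1 (2 * r + 1) ++ stairs r 0 :=
    rfl
  rw [List.append_assoc, swapNormalize_append, swapNormalize_append]
  change (stairs k (2 * r + 1 + 1)).foldr swapInsert ((stairs r 0).foldr swapInsert [1, 1]) = _
  have hmerge : stairs k (2 * r + 1 + 1) ++ (stairs 1 (2 * r + 1) ++ stairs r 0) =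
      stairs (k + 1) (2 * r + 1) ++ stairs r 0 := by
    rw [← List.append_assoc, stairs_append_stairs]
  rw [foldr_swapInsert_stairs, hsplit, foldr_swapInsert_of_pairwise, hmerge]
  exact hmerge ▸ pairwise_stairs_append_stairs (by omega)

lemma stripZeros_append_stairs {A : List ℕ} (hA : 0 ∉ A) (r : ℕ) :
    stripZeros (A ++ stairs r 0) = A ++ stairs (r - 1) 1 := by
  have hA' : ∀ {l}, 0 ∉ A ++ stairs l 1 := by simp [hA, mem_stairs]
  cases r with
  | zero => exact stripZeros_of_zero_not_mem (hA' (l := 0))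
  | succ r =>
    rw [← stairs_append_stairs r 1 0, show stairs 1 0 = [0] ++ [0] from rfl]
    simp only [← List.append_assoc, stripZeros_append_zero]
    exact stripZeros_of_zero_not_mem hA'

lemma applyNF_stairs (k r : ℕ) :
    applyNF (stairs k (2 * r + 2) ++ stairs r 0) [0, 0] =
      stairs (k + 1) (2 * r) ++ stairs (r - 1) 0 := by
  rw [applyNF, List.map_cons, List.map_cons, List.map_nil, swapNormalize_stairs,
    stripZeros_append_stairs (by simp [mem_stairs]), List.map_append, map_sub_one_stairs,
    map_sub_one_stairs]

lemma iterate_applyNF_stairs {k m : ℕ} (hk : k ≤ m) :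
    (applyNF · [0, 0])^[k] (stairs m 0) = stairs k (2 * (m - k) + 2) ++ stairs (m - k) 0 := by
  induction k with
  | zero => rfl
  | succ k ih =>
    obtain ⟨r, hr⟩ : ∃ r, m - k = r + 1 := ⟨m - k - 1, by omega⟩
    rw [iterate_succ_apply', ih (by omega), hr, applyNF_stairs, show m - (k + 1) = r by omega]
    rfl

def triangle (m : ℕ) : ℕ := m * (m + 1) / 2

lemma triangle_succ (m : ℕ) : triangle (m + 1) = (m + 1) + triangle m := by
  simp only [triangle]
  rw [show (m + 1) * (m + 1 + 1) = m * (m + 1) + (m + 1) * 2 by ring,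
    Nat.add_mul_div_right _ _ two_pos, add_comm]

lemma le_triangle (m : ℕ) : m ≤ triangle m := by
  induction m with
  | zero => rfl
  | succ m ih => rw [triangle_succ]; omega

lemma triangle_add_two_mul (i j : ℕ) :
    triangle (i + 2 * j) = j * (2 * i + 2 * j + 1) + triangle i := by
  simp only [triangle]
  rw [show (i + 2 * j) * (i + 2 * j + 1) = i * (i + 1) + j * (2 * i + 2 * j + 1) * 2 by ring,
    Nat.add_mul_div_right _ _ two_pos, add_comm]

lemma iterate_applyNF_triangle (m : ℕ) :
    (applyNF · [0, 0])^[triangle m] [] = stairs m 0 := by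
  induction m with
  | zero => rfl
  | succ m ih =>
    rw [triangle_succ, iterate_add_apply, ih, iterate_succ_apply', iterate_applyNF_stairs le_rfl,
      Nat.sub_self, applyNF_stairs]
    exact List.append_nil _

lemma not_isPeriodicPt_iterate_applyNF {j : ℕ} (hj : 0 < j) (i : ℕ) :
    ¬ IsPeriodicPt (applyNF · [0, 0]) j ((applyNF · [0, 0])^[i] []) := by
  intro h
  have hT : IsPeriodicPt (applyNF · [0, 0]) (j * (2 * i + 2 * j + 1))
      ((applyNF · [0, 0])^[triangle i] []) := by
    have := (h.apply_iterate (triangle i - i)).mul_const (2 * i + 2 * j + 1)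
    rwa [← iterate_add_apply, Nat.sub_add_cancel (le_triangle i)] at this
  have heq := hT.eq
  rw [← iterate_add_apply, ← triangle_add_two_mul, iterate_applyNF_triangle,
    iterate_applyNF_triangle] at heq
  have := congrArg List.length heq
  rw [length_stairs, length_stairs] at this
  omega

end B2

open B2 in
theorem b2_not_rho (f : ℕ → List ℕ)
    (h1 : f 1 = [0, 0])
    (hstep : ∀ i : ℕ, 1 ≤ i → Apply (f i) [0, 0] (f (i + 1))) :
    (∀ m : ℕ, 1 ≤ m → (f (m * (m + 1) / 2)).length = 2 * m) ∧
    ¬ ∃ i j : ℕ, 1 ≤ i ∧ 1 ≤ j ∧ f i = f (i + j) := by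
  have horbit : ∀ i, 1 ≤ i → f i = (applyNF · [0, 0])^[i] [] := by
    intro i hi
    induction i, hi using Nat.le_induction with
    | base => exact h1
    | succ i hi ih => rw [(hstep i hi).eq_applyNF, ih, iterate_succ_apply']
  refine ⟨fun m hm => ?_, ?_⟩
  · change (f (triangle m)).length = 2 * m
    rw [horbit _ (hm.trans (le_triangle m)), iterate_applyNF_triangle, length_stairs]
  · rintro ⟨i, j, hi, hj, hper⟩
    rw [horbit i hi, horbit (i + j) (by omega), add_comm, iterate_add_apply] at hper
    exact not_isPeriodicPt_iterate_applyNF hj i hper.symm
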